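/- arXiv:2309.13517 — 8 statements merged into one kernel-verified Lean document; each statement's English description precedes it below -/
import Mathlib

section
/- For any x_1,...,x_n ≥ 0 and y_1,...,y_n ≥ 0 with appropriate nonvanishing denominators: (1/Σ y_j) · Σ_j (y_j·x_j/(x_j+y_j)) ≤ (Σ x_j)/(Σ (x_j+y_j)). -/
/-- Convexity inequality (Lemma from Yang-Zhang) used in the bias lemma. -/
theorem convexity_inequality (n : ℕ) (x y : Fin n → ℝ)
    (hx : ∀ j, 0 ≤ x j) (hy : ∀ j, 0 ≤ y j)
    (hpos : ∀ j, 0 < x j + y j) (hsum : 0 < ∑ j, y j) :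
    (1 / ∑ j, y j) * ∑ j, y j * x j / (x j + y j) ≤
      (∑ j, x j) / (∑ j, (x j + y j)) := by
  set Y := ∑ j, y j with hY
  set S := ∑ j, (x j + y j) with hS
  have hSpos : 0 < S := Finset.sum_pos (fun j _ => hpos j) ⟨⟨0, Nat.pos_of_ne_zero (by
    rintro rfl; simp [hY] at hsum)⟩, Finset.mem_univ _⟩
  have hX : ∑ j, x j = S - Y := by
    rw [hS, hY, Finset.sum_add_distrib]; ring
  have key : ∀ j, y j * x j / (x j + y j) = y j - y j ^ 2 / (x j + y j) := by
    intro j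
    have h := (hpos j).ne'
    field_simp
    ring
  have hCS : Y ^ 2 / S ≤ ∑ j, y j ^ 2 / (x j + y j) :=
    Finset.sq_sum_div_le_sum_sq_div _ y (fun j _ => hpos j)
  have h1 : ∑ j, y j * x j / (x j + y j) ≤ Y - Y ^ 2 / S := by
    calc ∑ j, y j * x j / (x j + y j) = Y - ∑ j, y j ^ 2 / (x j + y j) := by
          simp_rw [key]; rw [Finset.sum_sub_distrib]
      _ ≤ Y - Y ^ 2 / S := by linarith
  have h2 : Y - Y ^ 2 / S = Y * (S - Y) / S := by field_simp
  rw [hX]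
  calc (1 / Y) * ∑ j, y j * x j / (x j + y j) ≤ (1 / Y) * (Y * (S - Y) / S) := by
        apply mul_le_mul_of_nonneg_left _ (by positivity)
        rw [← h2]; exact h1
    _ = (S - Y) / S := by field_simp
end

section
/- Let R = X_1 × ... × X_k ⊆ ({0,1}^I)^k be a combinatorial rectangle disjoint from the 'yes' instances D_*^I of k-party unique disjointness on coordinate set I. Then for every coordinate i ∈ I and every party j ∈ [k], the projected rectangle Π_{i,j}(R) ⊆ ({0,1}^{I∖{i}})^k is disjoint from D_*^{I∖{i}}. -/
/-- 'yes' instances of k-party unique disjointness on coordinate set I. -/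
def Dstar (I : Type) (k : ℕ) : Set (Fin k → I → Bool) :=
  {x | ∃ ℓ : I, (∀ j, x j ℓ = true) ∧
    ∀ i' ≠ ℓ, (∑ j, if x j i' then 1 else 0) ≤ 1}

/-- Combinatorial rectangle X_1 × ... × X_k. -/
def Rect {I : Type} {k : ℕ} (X : Fin k → Set (I → Bool)) : Set (Fin k → I → Bool) :=
  {x | ∀ j, x j ∈ X j}

/-- Extend a string on I∖{i} to a string on I with value b at coordinate i. -/
def extFun {I : Type} [DecidableEq I] (i : I) (x' : {i' : I // i' ≠ i} → Bool) (b : Bool) :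
    I → Bool :=
  fun i'' => if h : i'' = i then b else x' ⟨i'', h⟩

/-- The projection Π_{i,j} of a rectangle: party j keeps strings extendable by 0 or 1 at i,
    every other party keeps strings extendable by 0 at i. -/
def ProjX {I : Type} [DecidableEq I] {k : ℕ} (i : I) (j : Fin k)
    (X : Fin k → Set (I → Bool)) : Fin k → Set ({i' : I // i' ≠ i} → Bool) :=
  fun j' => if j' = j then {x' | extFun i x' false ∈ X j' ∨ extFun i x' true ∈ X j'}
            else {x' | extFun i x' false ∈ X j'}

/-- Projection preserves disjointness from the 'yes' instances. -/
theorem projection_preserves_monochromatic {I : Type} [Fintype I] [DecidableEq I] {k : ℕ}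
    (X : Fin k → Set (I → Bool)) (i : I) (j : Fin k)
    (h : Rect X ∩ Dstar I k = ∅) :
    Rect (ProjX i j X) ∩ Dstar {i' : I // i' ≠ i} k = ∅ := by
  classical
  rw [Set.eq_empty_iff_forall_notMem] at h ⊢
  rintro x' ⟨hr, ℓ, hall, hsum⟩
  set b : Bool := if extFun i (x' j) true ∈ X j then true else false with hb
  set x : Fin k → I → Bool := fun j' => extFun i (x' j') (if j' = j then b else false) with hx
  apply h x
  constructor
  · intro j'
    have hrj := hr j'
    by_cases hjj : j' = j
    · subst hjj
      simp only [ProjX, if_pos rfl, Set.mem_setOf_eq] at hrj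
      simp only [hx, if_pos rfl]
      rcases hrj with h0 | h1
      · by_cases ht : extFun i (x' j') true ∈ X j'
        · simpa [hb, ht] using ht
        · simpa [hb, ht] using h0
      · simp [hb, h1]
    · simp only [ProjX, if_neg hjj, Set.mem_setOf_eq] at hrj
      simpa [hx, hjj] using hrj
  · refine ⟨ℓ.1, ?_, ?_⟩
    · intro j'
      have : x j' ℓ.1 = x' j' ℓ := by
        simp [hx, extFun, ℓ.2]
      rw [this]; exact hall j'
    · intro i'' hne
      by_cases hii : i'' = i
      · subst hii
        calc (∑ j', if x j' i'' then 1 else 0)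
            ≤ ∑ j', if j' = j then 1 else 0 := by
              apply Finset.sum_le_sum
              intro j' _
              by_cases hjj : j' = j
              · subst hjj
                simp only [if_pos rfl]
                split <;> simp
              · simp [hx, hjj, extFun]
          _ = 1 := by simp
      · have hval : ∀ j', x j' i'' = x' j' ⟨i'', hii⟩ := by
          intro j'; simp [hx, extFun, hii]
        have hne' : (⟨i'', hii⟩ : {i' : I // i' ≠ i}) ≠ ℓ := by
          intro he
          exact hne (congrArg Subtype.val he)
        have := hsum ⟨i'', hii⟩ hne'
        simpa [hval] using this
end

section
/- Let R = X_1 × ... × X_k ⊆ ({0,1}^I)^k be a rectangle and i ∈ I a coordinate such that R contains no tuple with x_1(i) = ... = x_k(i) = 1 and all other coordinates summing to at most 1 (i.e., R ∩ D_i^I = ∅). Then for every x' ∈ D_0^{I∖{i}}, the number of extensions x ∈ R ∩ D_0^I with x restricted to I∖{i} equal to x' is at most k. -/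
/-- 'no' instances of k-party unique disjointness on coordinate set I. -/
def D0 (I : Type) (k : ℕ) : Set (Fin k → I → Bool) :=
  {x | ∀ i' : I, (∑ j, if x j i' then 1 else 0) ≤ 1}

/-- 'yes' instances with unique intersection at coordinate i. -/
def Di (I : Type) (k : ℕ) (i : I) : Set (Fin k → I → Bool) :=
  {x | (∀ j, x j i = true) ∧ ∀ i' ≠ i, (∑ j, if x j i' then 1 else 0) ≤ 1}

/-- Restriction of a k-tuple of strings on I to I∖{i}. -/
def restrictT {I : Type} {k : ℕ} (i : I) (x : Fin k → I → Bool) :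
    Fin k → {i' : I // i' ≠ i} → Bool :=
  fun j i' => x j i'.1

/-- If R ∩ D_i^I = ∅, every x' ∈ D_0^{I∖{i}} has at most k extensions in R ∩ D_0^I. -/
theorem extensions_le_k {I : Type} [Fintype I] [DecidableEq I] {k : ℕ}
    (X : Fin k → Set (I → Bool)) (i : I)
    (h : Rect X ∩ Di I k i = ∅)
    (x' : Fin k → {i' : I // i' ≠ i} → Bool) (hx' : x' ∈ D0 {i' : I // i' ≠ i} k) :
    Set.ncard {x | x ∈ Rect X ∩ D0 I k ∧ restrictT i x = x'} ≤ k := by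
  classical
  set T : Set (Fin k → I → Bool) :=
    {x | x ∈ Rect X ∩ D0 I k ∧ restrictT i x = x'} with hT
  -- at most one party has a 1 at coordinate i
  have huniq : ∀ x ∈ T, ∀ j j' : Fin k, x j i = true → x j' i = true → j = j' := by
    intro x hx j j' hj hj'
    by_contra hne
    have hsum : (∑ j'' : Fin k, if x j'' i then 1 else 0) ≤ 1 := hx.1.2 i
    have h2 : (2 : ℕ) ≤ ∑ j'' : Fin k, if x j'' i then 1 else 0 := by
      calc (2:ℕ) = ∑ j'' ∈ ({j, j'} : Finset (Fin k)), (if x j'' i then (1:ℕ) else 0) := by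
            rw [Finset.sum_pair hne, hj, hj']; simp
        _ ≤ ∑ j'' : Fin k, if x j'' i then 1 else 0 :=
            Finset.sum_le_sum_of_subset (Finset.subset_univ _)
    omega
  -- elements of T are determined by their values at coordinate i
  have hdet : ∀ x ∈ T, ∀ y ∈ T, (∀ j, x j i = y j i) → x = y := by
    intro x hx y hy hxy
    funext j i'
    by_cases hi : i' = i
    · subst hi; exact hxy j
    · have h1 : x j i' = x' j ⟨i', hi⟩ := congrFun (congrFun hx.2 j) ⟨i', hi⟩
      have h2 : y j i' = x' j ⟨i', hi⟩ := congrFun (congrFun hy.2 j) ⟨i', hi⟩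
      rw [h1, h2]
  by_cases hall : ∀ j : Fin k, ∃ x ∈ T, x j i = true
  · -- contradiction with h
    exfalso
    choose g hg1 hg2 using hall
    set y : Fin k → I → Bool := fun j => g j j with hy
    have hmem : y ∈ Rect X ∩ Di I k i := by
      refine ⟨fun j => (hg1 j).1.1 j, fun j => hg2 j, ?_⟩
      intro i' hi'
      have heq : ∀ j : Fin k, y j i' = x' j ⟨i', hi'⟩ :=
        fun j => congrFun (congrFun (hg1 j).2 j) ⟨i', hi'⟩
      have : (∑ j : Fin k, if y j i' then (1:ℕ) else 0)
           = ∑ j : Fin k, if x' j ⟨i', hi'⟩ then (1:ℕ) else 0 :=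
        Finset.sum_congr rfl (fun j _ => by rw [heq j])
      rw [this]
      exact hx' ⟨i', hi'⟩
    rw [h] at hmem
    exact hmem
  · push_neg at hall
    obtain ⟨j0, hj0⟩ := hall
    have hj0' : ∀ x ∈ T, x j0 i = false := by
      intro x hx
      have := hj0 x hx
      simpa using this
    set f : (Fin k → I → Bool) → Fin k :=
      fun x => if hex : ∃ j, x j i = true then hex.choose else j0 with hf
    have hinj : Set.InjOn f T := by
      intro x hx y hy hfxy
      apply hdet x hx y hy
      intro j
      by_cases hex : ∃ j', x j' i = true
      · by_cases hey : ∃ j', y j' i = true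
        · have hjx := hex.choose_spec
          have hjy := hey.choose_spec
          have : hex.choose = hey.choose := by
            simpa [hf, dif_pos hex, dif_pos hey] using hfxy
          by_cases hj : j = hex.choose
          · rw [hj, hjx, this, hjy]
          · have hx0 : x j i = false := by
              cases hxj : x j i
              · rfl
              · exact absurd (huniq x hx j hex.choose hxj hjx) hj
            have hy0 : y j i = false := by
              cases hyj : y j i
              · rfl
              · exact absurd (huniq y hy j hey.choose hyj hjy) (this ▸ hj)
            rw [hx0, hy0]
        · exfalso
          have : hex.choose = j0 := by simpa [hf, dif_pos hex, dif_neg hey] using hfxy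
          have := hex.choose_spec
          rw [‹hex.choose = j0›] at this
          rw [hj0' x hx] at this
          exact Bool.false_ne_true this
      · by_cases hey : ∃ j', y j' i = true
        · exfalso
          have : hey.choose = j0 := by
            have := hfxy.symm
            simpa [hf, dif_pos hey, dif_neg hex] using this
          have := hey.choose_spec
          rw [‹hey.choose = j0›] at this
          rw [hj0' y hy] at this
          exact Bool.false_ne_true this
        · push_neg at hex hey
          have hx0 : x j i = false := by simpa using hex j
          have hy0 : y j i = false := by simpa using hey j
          rw [hx0, hy0]
    have hfin : T.Finite := Set.toFinite T
    calc T.ncard = (f '' T).ncard := (Set.ncard_image_of_injOn hinj).symm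
      _ ≤ (Set.univ : Set (Fin k)).ncard :=
          Set.ncard_le_ncard (Set.subset_univ _) Set.finite_univ
      _ = k := by simp [Set.ncard_univ]
end

section
/- Full-range lemma: Let B be a finite set, I a finite index set, and S ⊆ B^I an r-thick set with r ≥ 2 (in particular r ≥ 10·log n suffices). Then for every z ∈ {0,1}^I there exist x, y ∈ S such that for all i ∈ I, z_i = 1 if and only if x_i = y_i. -/
/-- Full-range lemma: if S ⊆ B^I is r-thick with r ≥ 2, then every binary pattern of
    agreements/disagreements is realized by a pair of elements of S. -/
theorem full_range_lemma {ι B : Type} [Fintype ι] [DecidableEq ι] [DecidableEq B]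
    (S : Finset (ι → B)) (hne : S.Nonempty) (r : ℕ) (hr : 2 ≤ r)
    (hthick : ∀ i : ι, ∀ x ∈ S,
      r ≤ (S.filter (fun x' => ∀ j ≠ i, x' j = x j)).card) :
    ∀ z : ι → Bool, ∃ x ∈ S, ∃ y ∈ S, ∀ i : ι, z i = true ↔ x i = y i := by
  have key : ∀ F : Finset ι, ∃ x ∈ S, ∃ y ∈ S, ∀ i : ι, i ∉ F ↔ x i = y i := by
    intro F
    induction F using Finset.induction_on with
    | empty =>
      obtain ⟨x, hx⟩ := hne
      exact ⟨x, hx, x, hx, fun i => by simp⟩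
    | @insert i F hiF ih =>
      obtain ⟨x, hx, y, hy, hxy⟩ := ih
      have hyfilt : y ∈ S.filter (fun x' => ∀ j ≠ i, x' j = y j) := by
        simp [hy]
      have hcard : 1 < (S.filter (fun x' => ∀ j ≠ i, x' j = y j)).card :=
        lt_of_lt_of_le (by norm_num) (le_trans hr (hthick i y hy))
      obtain ⟨y', hy', hne'⟩ := Finset.exists_mem_ne hcard y
      rw [Finset.mem_filter] at hy'
      obtain ⟨hy'S, hy'eq⟩ := hy'
      have hyi : y' i ≠ y i := by
        intro h
        apply hne'
        funext j
        by_cases hj : j = i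
        · rw [hj, h]
        · exact hy'eq j hj
      refine ⟨x, hx, y', hy'S, fun j => ?_⟩
      by_cases hj : j = i
      · subst hj
        simp only [Finset.mem_insert, true_or, not_true_eq_false, false_iff]
        have : x j = y j := (hxy j).mp hiF
        rw [this]
        exact fun h => hyi h.symm
      · rw [hy'eq j hj]
        constructor
        · intro h
          exact (hxy j).mp (fun hjF => h (Finset.mem_insert_of_mem hjF))
        · intro h hmem
          rcases Finset.mem_insert.mp hmem with h1 | h2
          · exact hj h1
          · exact (hxy j).mpr h h2
  intro z
  obtain ⟨x, hx, y, hy, hxy⟩ := key (Finset.univ.filter (fun i => z i = false))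
  refine ⟨x, hx, y, hy, fun i => ?_⟩
  have := hxy i
  simp only [Finset.mem_filter, Finset.mem_univ, true_and] at this
  cases h : z i <;> simp_all
end

section
/- Corollary of the full-range lemma: if a rectangle R = X × Y ⊆ B^s × B^s contains a square (I, S, 𝒜) with I nonempty and S being 2-thick, then R is not monochromatic for s-UEQUAL; that is, R intersects both the set of 'no' instances B_0 and the set of 'yes' instances B_*. -/
/-- Corollary of the full-range lemma: a rectangle containing a 2-thick square with
    nonempty free coordinate set I is not monochromatic for s-UEQUAL: it contains both a
    'no' instance (x_i ≠ y_i everywhere) and a 'yes' instance (a unique agreement). -/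
theorem square_not_monochromatic {B : Type} [DecidableEq B] (s : ℕ)
    (X Y : Set (Fin s → B))
    (I : Finset (Fin s)) (hI : I.Nonempty)
    (S : Finset ({i : Fin s // i ∈ I} → B)) (A : Fin s → Set B)
    (hS : S.Nonempty)
    (hsq : ∀ z ∈ S, ∃ x ∈ X, ∃ y ∈ Y,
      (∀ i : {i : Fin s // i ∈ I}, x i.1 = z i ∧ y i.1 = z i) ∧
      (∀ i ∉ I, x i ∈ A i ∧ y i ∉ A i))
    (hthick : ∀ i : {i : Fin s // i ∈ I}, ∀ z ∈ S,
      2 ≤ (S.filter (fun z' => ∀ j ≠ i, z' j = z j)).card) :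
    (∃ x ∈ X, ∃ y ∈ Y, ∀ i, x i ≠ y i) ∧
    (∃ x ∈ X, ∃ y ∈ Y, ∃ ℓ, x ℓ = y ℓ ∧ ∀ i ≠ ℓ, x i ≠ y i) := by
  obtain ⟨l, hl⟩ := hI
  obtain ⟨z0, hz0⟩ := hS
  -- key lemma: we can flip exactly the coordinates in T
  have key : ∀ T : Finset {i : Fin s // i ∈ I}, ∀ z ∈ S, ∃ z' ∈ S,
      (∀ i ∈ T, z' i ≠ z i) ∧ (∀ i ∉ T, z' i = z i) := by
    intro T
    induction T using Finset.induction_on with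
    | empty =>
      intro z hz
      exact ⟨z, hz, by simp, by simp⟩
    | @insert i T hiT ih =>
      intro z hz
      obtain ⟨z', hz'S, h1, h2⟩ := ih z hz
      have hcard : 1 < (S.filter (fun w => ∀ j ≠ i, w j = z' j)).card := by
        exact lt_of_lt_of_le one_lt_two (hthick i z' hz'S)
      obtain ⟨w1, w2, hw1, hw2, hne⟩ := Finset.one_lt_card_iff.mp hcard
      rw [Finset.mem_filter] at hw1 hw2
      have hwi : w1 i ≠ w2 i := by
        intro h
        apply hne
        funext j
        by_cases hj : j = i
        · subst hj; exact h
        · rw [hw1.2 j hj, hw2.2 j hj]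
      have main : ∀ w, w ∈ S → (∀ j ≠ i, w j = z' j) → w i ≠ z i →
          ∃ z' ∈ S, (∀ k ∈ insert i T, z' k ≠ z k) ∧ (∀ k ∉ insert i T, z' k = z k) := by
        intro w hwS hwoff hwiz
        refine ⟨w, hwS, ?_, ?_⟩
        · intro k hk
          rcases Finset.mem_insert.mp hk with hk | hk
          · subst hk; exact hwiz
          · have hki : k ≠ i := fun h => hiT (h ▸ hk)
            rw [hwoff k hki]; exact h1 k hk
        · intro k hk
          rw [Finset.mem_insert, not_or] at hk
          rw [hwoff k hk.1]; exact h2 k hk.2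
      by_cases hc : w1 i = z i
      · exact main w2 hw2.1 hw2.2 (by rw [← hc]; exact fun h => hwi h.symm)
      · exact main w1 hw1.1 hw1.2 hc
  constructor
  · -- 'no' instance: flip all coordinates
    obtain ⟨z', hz'S, h1, _⟩ := key Finset.univ z0 hz0
    obtain ⟨x, hxX, y, hyY, hxyI, hxyA⟩ := hsq z0 hz0
    obtain ⟨x', hx'X, y', hy'Y, hx'yI, hx'yA⟩ := hsq z' hz'S
    refine ⟨x, hxX, y', hy'Y, fun i => ?_⟩
    by_cases hiI : i ∈ I
    · have := (hxyI ⟨i, hiI⟩).1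
      have := (hx'yI ⟨i, hiI⟩).2
      intro h
      exact h1 ⟨i, hiI⟩ (Finset.mem_univ _) (by
        rw [← (hx'yI ⟨i, hiI⟩).2, ← h, (hxyI ⟨i, hiI⟩).1])
    · intro h
      exact (hx'yA i hiI).2 (h ▸ (hxyA i hiI).1)
  · -- 'yes' instance: flip all coordinates except l
    set L : {i : Fin s // i ∈ I} := ⟨l, hl⟩
    obtain ⟨z', hz'S, h1, h2⟩ := key (Finset.univ.erase L) z0 hz0
    obtain ⟨x, hxX, y, hyY, hxyI, hxyA⟩ := hsq z0 hz0
    obtain ⟨x', hx'X, y', hy'Y, hx'yI, hx'yA⟩ := hsq z' hz'S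
    refine ⟨x, hxX, y', hy'Y, l, ?_, fun i hil => ?_⟩
    · have hzL : z' L = z0 L := h2 L (by simp)
      rw [(hxyI L).1, (hx'yI L).2, hzL]
    · by_cases hiI : i ∈ I
      · have hne : (⟨i, hiI⟩ : {i : Fin s // i ∈ I}) ∈ Finset.univ.erase L := by
          simp [Finset.mem_erase, L]
          exact fun h => hil (by rw [h])
        intro h
        exact h1 ⟨i, hiI⟩ hne (by
          rw [← (hx'yI ⟨i, hiI⟩).2, ← h, (hxyI ⟨i, hiI⟩).1])
      · intro h
        exact (hx'yA i hiI).2 (h ▸ (hxyA i hiI).1)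
end

section
/- Iterated degree reduction (core of the projection lemma for sparse unique-equality): Let I be a finite index set, B a finite set, α > 0, and S ⊆ B^I with |S| > (3α)^{|I|}. Then there exists a nonempty subset I' ⊆ I and a set S̃ ⊆ B^{I'} obtained by iteratively projecting away coordinates i with |S̃| ≤ 3α·|S̃_{-i}|, such that S̃ has average degree at least 3α and |S̃| ≥ |S|·(3α)^{|I'|-|I|}. -/
/-- Projection of S ⊆ B^ι onto the coordinates in J. -/
def projTo {ι B : Type} [Fintype ι] [DecidableEq ι] [DecidableEq B] (J : Finset ι)
    (S : Finset (ι → B)) : Finset ({i : ι // i ∈ J} → B) :=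
  S.image (fun x i => x i.1)

lemma aux_idr {ι B : Type} [Fintype ι] [DecidableEq ι] [DecidableEq B]
    (S : Finset (ι → B)) (α : ℝ) (hα : 0 < α)
    (hcard : ((3 * α) ^ Fintype.card ι : ℝ) < (S.card : ℝ)) :
    ∀ n (J : Finset ι), J.card ≤ n →
      (S.card : ℝ) * (3 * α) ^ ((J.card : ℤ) - (Fintype.card ι : ℤ)) ≤ ((projTo J S).card : ℝ) →
    ∃ J' : Finset ι, J'.Nonempty ∧
      (∀ i ∈ J', 3 * α * ((projTo (J'.erase i) S).card : ℝ) ≤ ((projTo J' S).card : ℝ)) ∧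
      (S.card : ℝ) * (3 * α) ^ ((J'.card : ℤ) - (Fintype.card ι : ℤ)) ≤
        ((projTo J' S).card : ℝ) := by
  have hc : (0:ℝ) < 3 * α := by linarith
  -- empty case is contradictory
  have hempty : ∀ (J : Finset ι), J = ∅ →
      (S.card : ℝ) * (3 * α) ^ ((J.card : ℤ) - (Fintype.card ι : ℤ)) ≤ ((projTo J S).card : ℝ) →
      False := by
    intro J hJ inv
    subst hJ
    haveI : IsEmpty {i : ι // i ∈ (∅ : Finset ι)} := ⟨fun x => absurd x.2 (Finset.notMem_empty _)⟩
    have h1 : ((projTo (∅ : Finset ι) S).card : ℝ) ≤ 1 := by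
      exact_mod_cast Nat.cast_le.mpr (Finset.card_le_one.mpr (fun a _ b _ => Subsingleton.elim a b))
    have hpow : (0:ℝ) < (3*α) ^ Fintype.card ι := pow_pos hc _
    have h2 : (S.card : ℝ) * ((3*α) ^ Fintype.card ι)⁻¹ ≤ 1 := by
      have : ((∅ : Finset ι).card : ℤ) - (Fintype.card ι : ℤ) = -(Fintype.card ι : ℤ) := by simp
      rw [this, zpow_neg, zpow_natCast] at inv
      linarith
    have : (S.card : ℝ) ≤ (3*α) ^ Fintype.card ι := by
      rw [← div_le_one hpow] at *
      simpa [div_eq_mul_inv] using h2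
    linarith
  intro n
  induction n with
  | zero =>
    intro J hJ inv
    exact absurd inv (fun h => hempty J (Finset.card_eq_zero.mp (Nat.le_zero.mp hJ)) h)
  | succ n ih =>
    intro J hJ inv
    rcases J.eq_empty_or_nonempty with hJe | hJne
    · exact absurd inv (hempty J hJe)
    by_cases hdeg : ∀ i ∈ J, 3 * α * ((projTo (J.erase i) S).card : ℝ) ≤ ((projTo J S).card : ℝ)
    · exact ⟨J, hJne, hdeg, inv⟩
    · push_neg at hdeg
      obtain ⟨i, hi, hlt⟩ := hdeg
      have hcardE : ((J.erase i).card : ℤ) = (J.card : ℤ) - 1 := by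
        rw [Finset.card_erase_of_mem hi]
        have h1 : 1 ≤ J.card := Finset.card_pos.mpr ⟨i, hi⟩
        omega
      have hle : (J.erase i).card ≤ n := by
        have := Finset.card_erase_of_mem hi
        omega
      apply ih (J.erase i) hle
      rw [hcardE]
      have key : ((projTo J S).card : ℝ) / (3 * α) ≤ ((projTo (J.erase i) S).card : ℝ) := by
        rw [div_le_iff₀ hc]
        nlinarith [hlt]
      have : (S.card : ℝ) * (3*α) ^ ((J.card : ℤ) - (Fintype.card ι : ℤ)) / (3*α)
          ≤ ((projTo (J.erase i) S).card : ℝ) := le_trans (by gcongr) key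
      calc (S.card : ℝ) * (3*α) ^ ((J.card : ℤ) - 1 - (Fintype.card ι : ℤ))
          = (S.card : ℝ) * (3*α) ^ ((J.card : ℤ) - (Fintype.card ι : ℤ)) / (3*α) := by
            rw [show (J.card : ℤ) - 1 - (Fintype.card ι : ℤ)
              = ((J.card : ℤ) - (Fintype.card ι : ℤ)) - 1 by ring,
              zpow_sub₀ hc.ne', zpow_one]
            ring
        _ ≤ _ := this

/-- Iterated degree reduction: if |S| > (3α)^{|I|}, there is a nonempty I' ⊆ I such that
    the projection S̃ of S onto I' has average degree at least 3α and
    |S̃| ≥ |S|·(3α)^{|I'|-|I|}. -/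
theorem iterated_degree_reduction {ι B : Type} [Fintype ι] [DecidableEq ι] [DecidableEq B]
    (S : Finset (ι → B)) (α : ℝ) (hα : 0 < α)
    (hcard : ((3 * α) ^ Fintype.card ι : ℝ) < (S.card : ℝ)) :
    ∃ J : Finset ι, J.Nonempty ∧
      (∀ i ∈ J, 3 * α * ((projTo (J.erase i) S).card : ℝ) ≤ ((projTo J S).card : ℝ)) ∧
      (S.card : ℝ) * (3 * α) ^ ((J.card : ℤ) - (Fintype.card ι : ℤ)) ≤
        ((projTo J S).card : ℝ) := by
  apply aux_idr S α hα hcard (Finset.univ.card) Finset.univ le_rfl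
  have hinj : Function.Injective (fun (x : ι → B) (i : {i : ι // i ∈ (Finset.univ : Finset ι)}) => x i.1) := by
    intro a b h
    funext j
    exact congrFun h ⟨j, Finset.mem_univ j⟩
  have : (projTo (Finset.univ : Finset ι) S).card = S.card := Finset.card_image_of_injective _ hinj
  rw [this]
  simp
end

section
/- Let R = X_1 × ... × X_k ⊆ ({0,1}^I)^k be a rectangle with R ∩ D_i^I = ∅ for some i ∈ I, and let L ⊆ D_0^{I∖{i}} be the set of restrictions to I∖{i} of elements of R ∩ D_0^I. Partition L into A = {x' ∈ L : x' has at least 2 extensions in R ∩ D_0^I} and B = {x' ∈ L : exactly 1 extension}. Then every x' ∈ A lies in Π_{i,j}(R) for every j ∈ [k], so |A| = |A ∩ Π_{i,j}(R)| for all j. -/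
/-- If z is in D0, has restriction x', and z j' i = false, then z j' is the zero-extension. -/
lemma ext_of_false {I : Type} [DecidableEq I] {k : ℕ} (i : I)
    {x' : Fin k → {i' : I // i' ≠ i} → Bool} {z : Fin k → I → Bool}
    (hr : restrictT i z = x') (j' : Fin k) (hz : z j' i = false) :
    z j' = extFun i (x' j') false := by
  funext i''
  by_cases h : i'' = i
  · subst h; simp [extFun, hz]
  · simp only [extFun, dif_neg h]
    rw [← hr]; rfl

/-- Every restriction with at least 2 extensions in R ∩ D_0^I lies in every projection
    Π_{i,j}(R); hence A ∩ Π_{i,j}(R) = A. -/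
theorem doubly_extendable_in_all_projections {I : Type} [Fintype I] [DecidableEq I]
    {k : ℕ} (X : Fin k → Set (I → Bool)) (i : I)
    (h : Rect X ∩ Di I k i = ∅) (j : Fin k) :
    ({x' : Fin k → {i' : I // i' ≠ i} → Bool |
        2 ≤ Set.ncard {x | x ∈ Rect X ∩ D0 I k ∧ restrictT i x = x'}} ⊆
      Rect (ProjX i j X)) ∧
    ({x' : Fin k → {i' : I // i' ≠ i} → Bool |
        2 ≤ Set.ncard {x | x ∈ Rect X ∩ D0 I k ∧ restrictT i x = x'}} ∩
      Rect (ProjX i j X) =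
      {x' : Fin k → {i' : I // i' ≠ i} → Bool |
        2 ≤ Set.ncard {x | x ∈ Rect X ∩ D0 I k ∧ restrictT i x = x'}}) := by
  have hsub : ({x' : Fin k → {i' : I // i' ≠ i} → Bool |
      2 ≤ Set.ncard {x | x ∈ Rect X ∩ D0 I k ∧ restrictT i x = x'}} ⊆
    Rect (ProjX i j X)) := by
    intro x' hx'
    simp only [Set.mem_setOf_eq] at hx'
    -- get two distinct extensions
    have hpos : {x | x ∈ Rect X ∩ D0 I k ∧ restrictT i x = x'}.ncard ≠ 0 := by omega
    obtain ⟨a, ha⟩ := Set.nonempty_of_ncard_ne_zero hpos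
    have h1 : 1 < {x | x ∈ Rect X ∩ D0 I k ∧ restrictT i x = x'}.ncard := by omega
    obtain ⟨b, hb, hba⟩ := Set.exists_ne_of_one_lt_ncard h1 a
    obtain ⟨⟨haX, haD⟩, har⟩ := ha
    obtain ⟨⟨hbX, hbD⟩, hbr⟩ := hb
    -- key: for each j', some extension has value false at (j', i)
    have key : ∀ j' : Fin k, extFun i (x' j') false ∈ X j' := by
      intro j'
      by_cases hA : a j' i = false
      · rw [← ext_of_false i har j' hA]; exact haX j'
      by_cases hB : b j' i = false
      · rw [← ext_of_false i hbr j' hB]; exact hbX j'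
      -- both true: derive contradiction
      exfalso
      simp only [Bool.not_eq_false] at hA hB
      have hne : ∃ m, a m i ≠ b m i := by
        by_contra hc
        push_neg at hc
        apply hba
        funext m i''
        by_cases hii : i'' = i
        · subst hii; exact (hc m).symm
        · have : x' m ⟨i'', hii⟩ = x' m ⟨i'', hii⟩ := rfl
          calc b m i'' = x' m ⟨i'', hii⟩ := by rw [← hbr]; rfl
          _ = a m i'' := by rw [← har]; rfl
      obtain ⟨m, hm⟩ := hne
      have hmj : m ≠ j' := by rintro rfl; rw [hA, hB] at hm; exact absurd rfl hm
      -- one of a, b has two trues at i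
      rcases Bool.eq_false_or_eq_true (a m i) with hma | hma
      · have := haD i
        have hle : ({m, j'} : Finset (Fin k)).sum (fun j'' => if a j'' i then 1 else 0) ≤
            ∑ j'', if a j'' i then 1 else 0 :=
          Finset.sum_le_sum_of_subset (Finset.subset_univ _)
        rw [Finset.sum_pair hmj, hma, hA] at hle
        norm_num at hle this
        omega
      · have hmb : b m i = true := by
          cases hbm : b m i
          · rw [hma, hbm] at hm; exact absurd rfl hm
          · rfl
        have := hbD i
        have hle : ({m, j'} : Finset (Fin k)).sum (fun j'' => if b j'' i then 1 else 0) ≤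
            ∑ j'', if b j'' i then 1 else 0 :=
          Finset.sum_le_sum_of_subset (Finset.subset_univ _)
        rw [Finset.sum_pair hmj, hmb, hB] at hle
        norm_num at hle this
        omega
    intro j'
    simp only [ProjX]
    by_cases hj : j' = j
    · simp only [hj, if_pos rfl]
      exact Or.inl (key j)
    · simp only [if_neg hj]
      exact key j'
  exact ⟨hsub, Set.inter_eq_self_of_subset_left hsub⟩
end

section
/- For jointly distributed finitely-supported random variables Q_I, W_I (over coordinates I), W_i, W_{I^c}, and R, if (Q_i, W_i) is independent of (Q_{I∖{i}}, W_{I∖{i}}) and W_{I^c} is independent of (Q_I, W_I), then: H(Q_I, W_I | W_{I^c}, R) decomposes via the chain rule as H(W_i | R, W_{I^c}) + H(Q_{I∖{i}}, W_{I∖{i}} | R, W_i, W_{I^c}) + H(Q_i | R, Q_{I∖{i}}, W_I, W_{I^c}), and consequently E^{I∖{i}} - E^I ≥ H(Q_i | W_i) - H(Q_i | R, Q_{I∖{i}}, W), where E^J := H(Q_J, W_J | W_{J^c}, R) - H(Q_J, W_J). -/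
open Finset

/-- Shannon entropy of the discrete random variable A on the finite probability space (Ω, p). -/
noncomputable def ent {Ω α : Type} [Fintype Ω] [Fintype α] [DecidableEq α]
    (p : Ω → ℝ) (A : Ω → α) : ℝ :=
  ∑ a : α, Real.negMulLog (∑ ω ∈ univ.filter (fun ω => A ω = a), p ω)

/-- Conditional entropy H(A|B) = H(A,B) - H(B). -/
noncomputable def condEnt {Ω α β : Type} [Fintype Ω] [Fintype α] [Fintype β]
    [DecidableEq α] [DecidableEq β] (p : Ω → ℝ) (A : Ω → α) (B : Ω → β) : ℝ :=
  ent p (fun ω => (A ω, B ω)) - ent p B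

/-- Independence of two discrete random variables. -/
def Indep {Ω α β : Type} [Fintype Ω] [DecidableEq α] [DecidableEq β]
    (p : Ω → ℝ) (A : Ω → α) (B : Ω → β) : Prop :=
  ∀ (a : α) (b : β),
    (∑ ω ∈ univ.filter (fun ω => A ω = a ∧ B ω = b), p ω) =
      (∑ ω ∈ univ.filter (fun ω => A ω = a), p ω) *
        (∑ ω ∈ univ.filter (fun ω => B ω = b), p ω)


set_option linter.unusedSectionVars false

lemma ent_relabel {Ω α β : Type} [Fintype Ω] [Fintype α] [Fintype β] [DecidableEq α] [DecidableEq β]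
    (p : Ω → ℝ) (B : Ω → β) (e : β → α) (he : Function.Injective e) :
    ent p (fun ω => e (B ω)) = ent p B := by
  have h1 : ∀ b : β, (univ.filter (fun ω => e (B ω) = e b)) = univ.filter (fun ω => B ω = b) :=
    fun b => filter_congr (fun ω _ => by simp [he.eq_iff])
  calc ent p (fun ω => e (B ω))
      = ∑ a ∈ univ.image e, Real.negMulLog (∑ ω ∈ univ.filter (fun ω => e (B ω) = a), p ω) := by
        rw [ent]
        symm
        apply sum_subset (subset_univ _)
        intro a _ ha
        have h0 : univ.filter (fun ω => e (B ω) = a) = ∅ := by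
          rw [filter_eq_empty_iff]
          intro ω _ h
          exact ha (mem_image.mpr ⟨B ω, mem_univ _, h⟩)
        simp [h0]
    _ = ∑ b : β, Real.negMulLog (∑ ω ∈ univ.filter (fun ω => e (B ω) = e b), p ω) :=
        sum_image (fun x _ y _ h => he h)
    _ = ent p B := by rw [ent]; exact Finset.sum_congr rfl (fun b _ => by rw [h1 b])


section Aux
variable {Ω α β : Type} [Fintype Ω] [Fintype α] [Fintype β] [DecidableEq α] [DecidableEq β]

lemma sum_pm (p : Ω → ℝ) (A : Ω → α) :
    ∑ a : α, (∑ ω ∈ univ.filter (fun ω => A ω = a), p ω) = ∑ ω : Ω, p ω :=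
  Finset.sum_fiberwise univ A p

lemma filter_pair_eq (A : Ω → α) (B : Ω → β) (a : α) (b : β) :
    univ.filter (fun ω => (A ω, B ω) = (a, b)) = univ.filter (fun ω => A ω = a ∧ B ω = b) :=
  filter_congr (fun ω _ => by simp [Prod.ext_iff])

lemma ent_pair_of_indep (p : Ω → ℝ) (hp1 : ∑ ω : Ω, p ω = 1)
    (A : Ω → α) (B : Ω → β) (h : Indep p A B) :
    ent p (fun ω => (A ω, B ω)) = ent p A + ent p B := by
  have hq : ∑ a : α, (∑ ω ∈ univ.filter (fun ω => A ω = a), p ω) = 1 := by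
    rw [sum_pm]; exact hp1
  have hr : ∑ b : β, (∑ ω ∈ univ.filter (fun ω => B ω = b), p ω) = 1 := by
    rw [sum_pm]; exact hp1
  rw [ent, Fintype.sum_prod_type]
  calc ∑ a : α, ∑ b : β,
        Real.negMulLog (∑ ω ∈ univ.filter (fun ω => (A ω, B ω) = (a, b)), p ω)
      = ∑ a : α, ∑ b : β,
          ((∑ ω ∈ univ.filter (fun ω => B ω = b), p ω) *
              Real.negMulLog (∑ ω ∈ univ.filter (fun ω => A ω = a), p ω) +
            (∑ ω ∈ univ.filter (fun ω => A ω = a), p ω) *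
              Real.negMulLog (∑ ω ∈ univ.filter (fun ω => B ω = b), p ω)) := by
        refine sum_congr rfl fun a _ => sum_congr rfl fun b _ => ?_
        rw [filter_pair_eq, h a b, Real.negMulLog_mul]
    _ = ∑ a : α,
          (Real.negMulLog (∑ ω ∈ univ.filter (fun ω => A ω = a), p ω) +
            (∑ ω ∈ univ.filter (fun ω => A ω = a), p ω) *
              ∑ b : β, Real.negMulLog (∑ ω ∈ univ.filter (fun ω => B ω = b), p ω)) := by
        refine sum_congr rfl fun a _ => ?_
        rw [Finset.sum_add_distrib, ← Finset.sum_mul, ← Finset.mul_sum, hr, one_mul]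
    _ = ent p A + ent p B := by
        rw [Finset.sum_add_distrib, ← Finset.sum_mul, hq, one_mul, ent, ent]
end Aux

lemma gibbs_term {x y : ℝ} (hx : 0 ≤ x) (hy : 0 ≤ y) (h : x ≠ 0 → 0 < y) :
    Real.negMulLog x + x * Real.log y ≤ y - x := by
  rcases eq_or_lt_of_le hx with h0 | h0
  · simp [← h0, hy]
  · have hy' := h h0.ne'
    have h1 := Real.log_le_sub_one_of_pos (div_pos hy' h0)
    have h2 : x * Real.log (y / x) ≤ x * (y / x - 1) :=
      mul_le_mul_of_nonneg_left h1 hx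
    rw [Real.log_div hy'.ne' h0.ne'] at h2
    have h3 : x * (y / x - 1) = y - x := by field_simp
    rw [Real.negMulLog]
    nlinarith

section Sub
variable {Ω α β : Type} [Fintype Ω] [Fintype α] [Fintype β] [DecidableEq α] [DecidableEq β]

lemma ent_pair_le (p : Ω → ℝ) (hp : ∀ ω, 0 ≤ p ω) (hp1 : ∑ ω : Ω, p ω = 1)
    (A : Ω → α) (B : Ω → β) :
    ent p (fun ω => (A ω, B ω)) ≤ ent p A + ent p B := by
  set f : α × β → ℝ := fun c => ∑ ω ∈ univ.filter (fun ω => (A ω, B ω) = c), p ω with hf_def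
  set q : α → ℝ := fun a => ∑ ω ∈ univ.filter (fun ω => A ω = a), p ω with hq_def
  set r : β → ℝ := fun b => ∑ ω ∈ univ.filter (fun ω => B ω = b), p ω with hr_def
  have hfnn : ∀ c, 0 ≤ f c := fun c => sum_nonneg fun ω _ => hp ω
  have hqnn : ∀ a, 0 ≤ q a := fun a => sum_nonneg fun ω _ => hp ω
  have hrnn : ∀ b, 0 ≤ r b := fun b => sum_nonneg fun ω _ => hp ω
  have hmarg1 : ∀ a, ∑ b : β, f (a, b) = q a := by
    intro a
    show _ = ∑ ω ∈ univ.filter (fun ω => A ω = a), p ω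
    rw [← Finset.sum_fiberwise (univ.filter (fun ω => A ω = a)) B p]
    refine sum_congr rfl fun b _ => ?_
    show ∑ ω ∈ univ.filter (fun ω => (A ω, B ω) = (a, b)), p ω = _
    congr 1
    rw [filter_filter]
    exact filter_congr (fun ω _ => by simp [Prod.ext_iff])
  have hmarg2 : ∀ b, ∑ a : α, f (a, b) = r b := by
    intro b
    show _ = ∑ ω ∈ univ.filter (fun ω => B ω = b), p ω
    rw [← Finset.sum_fiberwise (univ.filter (fun ω => B ω = b)) A p]
    refine sum_congr rfl fun a _ => ?_
    show ∑ ω ∈ univ.filter (fun ω => (A ω, B ω) = (a, b)), p ω = _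
    congr 1
    rw [filter_filter]
    exact filter_congr (fun ω _ => by simp [Prod.ext_iff, and_comm])
  have hfle1 : ∀ a b, f (a, b) ≤ q a := by
    intro a b
    rw [← hmarg1 a]
    exact Finset.single_le_sum (fun b _ => hfnn (a, b)) (mem_univ b)
  have hfle2 : ∀ a b, f (a, b) ≤ r b := by
    intro a b
    rw [← hmarg2 b]
    exact Finset.single_le_sum (fun a _ => hfnn (a, b)) (mem_univ a)
  have hsumf : ∑ c : α × β, f c = 1 := by
    show ∑ c : α × β, (∑ ω ∈ univ.filter (fun ω => (fun ω => (A ω, B ω)) ω = c), p ω) = 1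
    rw [sum_pm p (fun ω => (A ω, B ω))]; exact hp1
  have hsumq : ∑ a : α, q a = 1 := by
    show ∑ a : α, (∑ ω ∈ univ.filter (fun ω => A ω = a), p ω) = 1
    rw [sum_pm]; exact hp1
  have hsumr : ∑ b : β, r b = 1 := by
    show ∑ b : β, (∑ ω ∈ univ.filter (fun ω => B ω = b), p ω) = 1
    rw [sum_pm]; exact hp1
  set g : α × β → ℝ := fun c => q c.1 * r c.2 with hg_def
  have hgnn : ∀ c, 0 ≤ g c := fun c => mul_nonneg (hqnn _) (hrnn _)
  have hfg : ∀ c, f c ≠ 0 → 0 < g c := by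
    rintro ⟨a, b⟩ hc
    have h1 : 0 < f (a, b) := lt_of_le_of_ne (hfnn _) (Ne.symm hc)
    exact mul_pos (lt_of_lt_of_le h1 (hfle1 a b)) (lt_of_lt_of_le h1 (hfle2 a b))
  have hsumg : ∑ c : α × β, g c = 1 := by
    show ∑ c : α × β, q c.1 * r c.2 = 1
    rw [Fintype.sum_prod_type, ← Finset.sum_mul_sum, hsumq, hsumr, one_mul]
  have hgibbs : ∑ c : α × β, Real.negMulLog (f c) ≤ ∑ c : α × β, (-(f c * Real.log (g c))) := by
    have h1 : ∑ c : α × β, (Real.negMulLog (f c) + f c * Real.log (g c)) ≤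
        ∑ c : α × β, (g c - f c) :=
      sum_le_sum fun c _ => gibbs_term (hfnn c) (hgnn c) (hfg c)
    rw [Finset.sum_sub_distrib, Finset.sum_add_distrib] at h1
    rw [Finset.sum_neg_distrib]
    linarith
  have hentA : ent p A = ∑ a : α, Real.negMulLog (q a) := rfl
  have hentB : ent p B = ∑ b : β, Real.negMulLog (r b) := rfl
  have hsplit : ∑ c : α × β, (-(f c * Real.log (g c))) = ent p A + ent p B := by
    have hterm : ∀ c : α × β, -(f c * Real.log (g c)) =
        -(f c * Real.log (q c.1)) + -(f c * Real.log (r c.2)) := by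
      rintro ⟨a, b⟩
      by_cases hc : f (a, b) = 0
      · simp [hc]
      · have hq' : 0 < q a := lt_of_lt_of_le (lt_of_le_of_ne (hfnn _) (Ne.symm hc)) (hfle1 a b)
        have hr' : 0 < r b := lt_of_lt_of_le (lt_of_le_of_ne (hfnn _) (Ne.symm hc)) (hfle2 a b)
        show -(f (a, b) * Real.log (q a * r b)) = _
        rw [Real.log_mul hq'.ne' hr'.ne']
        ring
    rw [Finset.sum_congr rfl (fun c _ => hterm c), Finset.sum_add_distrib]
    have e1 : ∑ c : α × β, -(f c * Real.log (q c.1)) = ∑ a : α, Real.negMulLog (q a) := by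
      rw [Fintype.sum_prod_type]
      refine sum_congr rfl fun a _ => ?_
      show ∑ b : β, -(f (a, b) * Real.log (q a)) = _
      rw [Finset.sum_neg_distrib, ← Finset.sum_mul, hmarg1 a, Real.negMulLog]
      ring
    have e2 : ∑ c : α × β, -(f c * Real.log (r c.2)) = ∑ b : β, Real.negMulLog (r b) := by
      rw [Fintype.sum_prod_type_right]
      refine sum_congr rfl fun b _ => ?_
      show ∑ a : α, -(f (a, b) * Real.log (r b)) = _
      rw [Finset.sum_neg_distrib, ← Finset.sum_mul, hmarg2 b, Real.negMulLog]
      ring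
    rw [e1, e2, hentA, hentB]
  calc ent p (fun ω => (A ω, B ω)) = ∑ c : α × β, Real.negMulLog (f c) := rfl
    _ ≤ ∑ c : α × β, (-(f c * Real.log (g c))) := hgibbs
    _ = ent p A + ent p B := hsplit


/-- Chain-rule decomposition and the resulting density increment inequality
    E^{I∖{i}} - E^I ≥ H(Q_i|W_i) - H(Q_i | R, Q_{I∖{i}}, W),
    where E^J = H(Q_J, W_J | W_{J^c}, R) - H(Q_J, W_J). -/
theorem entropy_chain_rule_density_increment
    {Ω α₁ α₂ β₁ β₂ γ ρ : Type} [Fintype Ω] [Fintype α₁] [Fintype α₂] [Fintype β₁]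
    [Fintype β₂] [Fintype γ] [Fintype ρ] [DecidableEq α₁] [DecidableEq α₂]
    [DecidableEq β₁] [DecidableEq β₂] [DecidableEq γ] [DecidableEq ρ]
    (p : Ω → ℝ) (hp : ∀ ω, 0 ≤ p ω) (hp1 : ∑ ω : Ω, p ω = 1)
    (Qi : Ω → α₁) (QIi : Ω → α₂) (Wi : Ω → β₁) (WIi : Ω → β₂)
    (WIc : Ω → γ) (R : Ω → ρ)
    (hind₁ : Indep p (fun ω => (Qi ω, Wi ω)) (fun ω => (QIi ω, WIi ω)))
    (hind₂ : Indep p WIc (fun ω => ((Qi ω, QIi ω), (Wi ω, WIi ω)))) :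
    (condEnt p (fun ω => ((Qi ω, QIi ω), (Wi ω, WIi ω))) (fun ω => (WIc ω, R ω)) =
        condEnt p Wi (fun ω => (R ω, WIc ω)) +
        condEnt p (fun ω => (QIi ω, WIi ω)) (fun ω => (R ω, Wi ω, WIc ω)) +
        condEnt p Qi (fun ω => (R ω, QIi ω, (Wi ω, WIi ω), WIc ω))) ∧
    ((condEnt p (fun ω => (QIi ω, WIi ω)) (fun ω => ((Wi ω, WIc ω), R ω)) -
        ent p (fun ω => (QIi ω, WIi ω))) -
      (condEnt p (fun ω => ((Qi ω, QIi ω), (Wi ω, WIi ω))) (fun ω => (WIc ω, R ω)) -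
        ent p (fun ω => ((Qi ω, QIi ω), (Wi ω, WIi ω)))) ≥
      condEnt p Qi Wi -
        condEnt p Qi (fun ω => (R ω, QIi ω, (WIc ω, (Wi ω, WIi ω))))) := by
  have inj : ∀ {σ τ : Type} (e : σ → τ), (∀ x y : σ, e x = e y → x = y) → Function.Injective e :=
    fun e h x y => h x y
  -- canonical tuples
  have h1 : ent p (fun ω => (((Qi ω, QIi ω), (Wi ω, WIi ω)), (WIc ω, R ω))) =
      ent p (fun ω => (Qi ω, QIi ω, Wi ω, WIi ω, WIc ω, R ω)) :=
    ent_relabel p (fun ω => (Qi ω, QIi ω, Wi ω, WIi ω, WIc ω, R ω))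
      (fun x => (((x.1, x.2.1), (x.2.2.1, x.2.2.2.1)), (x.2.2.2.2.1, x.2.2.2.2.2)))
      (by intro x y h; simp only [Prod.mk.injEq] at h; simp only [Prod.ext_iff]; tauto)
  have h2 : ent p (fun ω => (Wi ω, (R ω, WIc ω))) =
      ent p (fun ω => (Wi ω, WIc ω, R ω)) :=
    ent_relabel p (fun ω => (Wi ω, WIc ω, R ω))
      (fun x => (x.1, (x.2.2, x.2.1)))
      (by intro x y h; simp only [Prod.mk.injEq] at h; simp only [Prod.ext_iff]; tauto)
  have h3 : ent p (fun ω => (R ω, WIc ω)) = ent p (fun ω => (WIc ω, R ω)) :=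
    ent_relabel p (fun ω => (WIc ω, R ω)) (fun x => (x.2, x.1))
      (by intro x y h; simp only [Prod.mk.injEq] at h; simp only [Prod.ext_iff]; tauto)
  have h4 : ent p (fun ω => ((QIi ω, WIi ω), (R ω, Wi ω, WIc ω))) =
      ent p (fun ω => (QIi ω, Wi ω, WIi ω, WIc ω, R ω)) :=
    ent_relabel p (fun ω => (QIi ω, Wi ω, WIi ω, WIc ω, R ω))
      (fun x => ((x.1, x.2.2.1), (x.2.2.2.2, x.2.1, x.2.2.2.1)))
      (by intro x y h; simp only [Prod.mk.injEq] at h; simp only [Prod.ext_iff]; tauto)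
  have h5 : ent p (fun ω => (R ω, Wi ω, WIc ω)) =
      ent p (fun ω => (Wi ω, WIc ω, R ω)) :=
    ent_relabel p (fun ω => (Wi ω, WIc ω, R ω))
      (fun x => (x.2.2, x.1, x.2.1))
      (by intro x y h; simp only [Prod.mk.injEq] at h; simp only [Prod.ext_iff]; tauto)
  have h6 : ent p (fun ω => (Qi ω, (R ω, QIi ω, (Wi ω, WIi ω), WIc ω))) =
      ent p (fun ω => (Qi ω, QIi ω, Wi ω, WIi ω, WIc ω, R ω)) :=
    ent_relabel p (fun ω => (Qi ω, QIi ω, Wi ω, WIi ω, WIc ω, R ω))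
      (fun x => (x.1, (x.2.2.2.2.2, x.2.1, (x.2.2.1, x.2.2.2.1), x.2.2.2.2.1)))
      (by intro x y h; simp only [Prod.mk.injEq] at h; simp only [Prod.ext_iff]; tauto)
  have h7 : ent p (fun ω => (R ω, QIi ω, (Wi ω, WIi ω), WIc ω)) =
      ent p (fun ω => (QIi ω, Wi ω, WIi ω, WIc ω, R ω)) :=
    ent_relabel p (fun ω => (QIi ω, Wi ω, WIi ω, WIc ω, R ω))
      (fun x => (x.2.2.2.2, x.1, (x.2.1, x.2.2.1), x.2.2.2.1))
      (by intro x y h; simp only [Prod.mk.injEq] at h; simp only [Prod.ext_iff]; tauto)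
  have h8 : ent p (fun ω => ((QIi ω, WIi ω), ((Wi ω, WIc ω), R ω))) =
      ent p (fun ω => (QIi ω, Wi ω, WIi ω, WIc ω, R ω)) :=
    ent_relabel p (fun ω => (QIi ω, Wi ω, WIi ω, WIc ω, R ω))
      (fun x => ((x.1, x.2.2.1), ((x.2.1, x.2.2.2.1), x.2.2.2.2)))
      (by intro x y h; simp only [Prod.mk.injEq] at h; simp only [Prod.ext_iff]; tauto)
  have h9 : ent p (fun ω => ((Wi ω, WIc ω), R ω)) =
      ent p (fun ω => (Wi ω, WIc ω, R ω)) :=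
    ent_relabel p (fun ω => (Wi ω, WIc ω, R ω))
      (fun x => ((x.1, x.2.1), x.2.2))
      (by intro x y h; simp only [Prod.mk.injEq] at h; simp only [Prod.ext_iff]; tauto)
  have h10 : ent p (fun ω => (Qi ω, (R ω, QIi ω, (WIc ω, (Wi ω, WIi ω))))) =
      ent p (fun ω => (Qi ω, QIi ω, Wi ω, WIi ω, WIc ω, R ω)) :=
    ent_relabel p (fun ω => (Qi ω, QIi ω, Wi ω, WIi ω, WIc ω, R ω))
      (fun x => (x.1, (x.2.2.2.2.2, x.2.1, (x.2.2.2.2.1, (x.2.2.1, x.2.2.2.1)))))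
      (by intro x y h; simp only [Prod.mk.injEq] at h; simp only [Prod.ext_iff]; tauto)
  have h11 : ent p (fun ω => (R ω, QIi ω, (WIc ω, (Wi ω, WIi ω)))) =
      ent p (fun ω => (QIi ω, Wi ω, WIi ω, WIc ω, R ω)) :=
    ent_relabel p (fun ω => (QIi ω, Wi ω, WIi ω, WIc ω, R ω))
      (fun x => (x.2.2.2.2, x.1, (x.2.2.2.1, (x.2.1, x.2.2.1))))
      (by intro x y h; simp only [Prod.mk.injEq] at h; simp only [Prod.ext_iff]; tauto)
  have h12 : ent p (fun ω => ((Qi ω, QIi ω), (Wi ω, WIi ω))) =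
      ent p (fun ω => ((Qi ω, Wi ω), (QIi ω, WIi ω))) :=
    ent_relabel p (fun ω => ((Qi ω, Wi ω), (QIi ω, WIi ω)))
      (fun x => ((x.1.1, x.2.1), (x.1.2, x.2.2)))
      (by intro x y h; simp only [Prod.mk.injEq] at h; simp only [Prod.ext_iff]; tauto)
  have hJ : ent p (fun ω => ((Qi ω, Wi ω), (QIi ω, WIi ω))) =
      ent p (fun ω => (Qi ω, Wi ω)) + ent p (fun ω => (QIi ω, WIi ω)) :=
    ent_pair_of_indep p hp1 _ _ hind₁
  have hsub : ent p (fun ω => (Wi ω, WIc ω, R ω)) ≤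
      ent p Wi + ent p (fun ω => (WIc ω, R ω)) :=
    ent_pair_le p hp hp1 Wi (fun ω => (WIc ω, R ω))
  constructor
  · simp only [condEnt]
    linarith [h1, h2, h3, h4, h5, h6, h7]
  · simp only [condEnt]
    linarith [h1, h3, h8, h9, h10, h11, h12, hJ, hsub]
end Sub
end
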